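/- For n ∈ Z and ε ∈ R, the function v^{(n)}(x; ε) = ( (1 + √(1+ε^2)) e^{inx}, -iε e^{i(n+1)x} ) is a 2π-periodic eigenfunction of the operator W̃(ε) = -i σ3 d/dx - (ε^2/4) I + (iε/2)[B(x) d/dx + d/dx B(x)], where B(x) = [[0, -i e^{-ix}],[i e^{ix}, 0]] and σ3 = [[1,0],[0,-1]], with eigenvalue λ_n(ε) = -1/2 - ε^2/4 + √(1+ε^2)(n + 1/2). -/

import Mathlib

open scoped Real

/-- The matrix function `B(x) = [[0, -i e^{-ix}],[i e^{ix}, 0]]`. -/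
noncomputable def Bmat (x : ℝ) : Matrix (Fin 2) (Fin 2) ℂ :=
  !![0, -Complex.I * Complex.exp (-Complex.I * x);
     Complex.I * Complex.exp (Complex.I * x), 0]

/-- The operator `W̃(ε) = -i σ₃ d/dx - (ε²/4) I + (iε/2)(B d/dx + d/dx B)` of Section 8. -/
noncomputable def Wtilde (ε : ℝ) (v : ℝ → Fin 2 → ℂ) (x : ℝ) (i : Fin 2) : ℂ :=
  -Complex.I * (∑ j, (!![1, 0; 0, -1] : Matrix (Fin 2) (Fin 2) ℂ) i j * deriv (fun t => v t j) x)
    - ((ε ^ 2 / 4 : ℝ) : ℂ) * v x i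
    + (Complex.I * (ε : ℂ) / 2) *
        ((∑ j, Bmat x i j * deriv (fun t => v t j) x) +
          deriv (fun t => ∑ j, Bmat t i j * v t j) x)

/-- The explicit eigenfunction `v⁽ⁿ⁾(x; ε) = ((1+√(1+ε²)) e^{inx}, -iε e^{i(n+1)x})`. -/
noncomputable def vn (n : ℤ) (ε : ℝ) (x : ℝ) : Fin 2 → ℂ :=
  ![((1 + Real.sqrt (1 + ε ^ 2) : ℝ) : ℂ) * Complex.exp (Complex.I * (n : ℂ) * (x : ℂ)),
    -Complex.I * (ε : ℂ) * Complex.exp (Complex.I * ((n : ℂ) + 1) * (x : ℂ))]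

/-!
`B(x)` swaps the two components and shifts their Fourier modes by `∓1`, so `W̃(ε)` maps
every function `(a e^{inx}, b e^{i(n+1)x})` to another one of the same form, acting on the
coefficients `(a, b)` by the Hermitian matrix
`[[n - ε²/4, iε(2n+1)/2], [-iε(2n+1)/2, -(n+1) - ε²/4]]`.
Its eigenvector `(1 + √(1+ε²), -iε)` has eigenvalue `λₙ(ε)`, as one checks using `√(1+ε²)² = 1 + ε²`.
-/

open Complex Matrix

noncomputable def twoModeWave (n : ℤ) (a b : ℂ) (x : ℝ) : Fin 2 → ℂ :=
  ![a * exp (I * (n : ℂ) * (x : ℂ)), b * exp (I * ((n : ℂ) + 1) * (x : ℂ))]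

lemma exp_I_int_mul_periodic (k : ℤ) :
    Function.Periodic (fun x : ℝ => exp (I * (k : ℂ) * (x : ℂ))) (2 * π) := by
  intro x
  dsimp only
  rw [show I * (k : ℂ) * ((x + 2 * π : ℝ) : ℂ) = I * k * x + k * (2 * π * I) by push_cast; ring,
    exp_add, exp_int_mul_two_pi_mul_I, mul_one]

lemma twoModeWave_periodic (n : ℤ) (a b : ℂ) : Function.Periodic (twoModeWave n a b) (2 * π) := by
  intro x
  have h₀ := exp_I_int_mul_periodic n x
  have h₁ := exp_I_int_mul_periodic (n + 1) x
  push_cast at h₀ h₁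
  simp only [twoModeWave]
  push_cast
  rw [h₀, h₁]

lemma twoModeWave_mul (n : ℤ) (c a b : ℂ) (x : ℝ) (i : Fin 2) :
    twoModeWave n (c * a) (c * b) x i = c * twoModeWave n a b x i := by
  fin_cases i <;> simp [twoModeWave, mul_assoc]

lemma hasDerivAt_mul_exp_mul (a k : ℂ) (x : ℝ) :
    HasDerivAt (fun t : ℝ => a * exp (k * t)) (a * k * exp (k * x)) x := by
  have h := (((hasDerivAt_id (x : ℂ)).const_mul k).cexp.const_mul a).comp_ofReal
  simp only [id_eq, mul_one] at h
  convert h using 1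
  ring

lemma deriv_twoModeWave_apply (n : ℤ) (a b : ℂ) (x : ℝ) (i : Fin 2) :
    deriv (fun t => twoModeWave n a b t i) x =
      twoModeWave n (I * n * a) (I * (n + 1) * b) x i := by
  fin_cases i
  · simp only [twoModeWave, Fin.zero_eta, cons_val_zero]
    rw [(hasDerivAt_mul_exp_mul a _ x).deriv]
    ring
  · simp only [twoModeWave, Fin.mk_one, cons_val_one, cons_val_zero]
    rw [(hasDerivAt_mul_exp_mul b _ x).deriv]
    ring

lemma Bmat_mulVec_twoModeWave (n : ℤ) (a b : ℂ) (x : ℝ) :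
    Bmat x *ᵥ twoModeWave n a b x = twoModeWave n (-I * b) (I * a) x := by
  have hshift : exp (I * ((n : ℂ) + 1) * x) = exp (I * x) * exp (I * n * x) := by
    rw [← exp_add]; ring_nf
  have hinv : exp (-(I * x)) * exp (I * x) = 1 := by
    rw [← exp_add]; simp
  ext i
  fin_cases i <;>
    simp only [Bmat, twoModeWave, mulVec, dotProduct, Fin.sum_univ_two, hshift, Fin.zero_eta,
      Fin.mk_one, Fin.isValue, of_apply, cons_val', cons_val_zero, cons_val_one, cons_val_fin_one,
      neg_mul, zero_mul, zero_add, add_zero]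
  · linear_combination (-I * b * exp (I * n * x)) * hinv
  · ring

lemma Wtilde_twoModeWave (ε : ℝ) (n : ℤ) (a b : ℂ) (x : ℝ) (i : Fin 2) :
    Wtilde ε (twoModeWave n a b) x i =
      twoModeWave n ((n - ε ^ 2 / 4) * a + I * ε * (2 * n + 1) / 2 * b)
        (-(I * ε * (2 * n + 1) / 2) * a - (n + 1 + ε ^ 2 / 4) * b) x i := by
  have hB_deriv : ∑ j, Bmat x i j * deriv (fun t => twoModeWave n a b t j) x =
      twoModeWave n (-I * (I * (n + 1) * b)) (I * (I * n * a)) x i := by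
    simp only [deriv_twoModeWave_apply]
    exact congrFun (Bmat_mulVec_twoModeWave n _ _ x) i
  have hderiv_B : deriv (fun t => ∑ j, Bmat t i j * twoModeWave n a b t j) x =
      twoModeWave n (I * n * (-I * b)) (I * (n + 1) * (I * a)) x i := by
    have hBv : (fun t => ∑ j, Bmat t i j * twoModeWave n a b t j) =
        fun t => twoModeWave n (-I * b) (I * a) t i :=
      funext fun t => congrFun (Bmat_mulVec_twoModeWave n a b t) i
    rw [hBv, deriv_twoModeWave_apply]
  simp only [Wtilde]
  rw [hB_deriv, hderiv_B]
  simp only [deriv_twoModeWave_apply]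
  fin_cases i <;>
  · simp only [twoModeWave, Fin.sum_univ_two, Fin.zero_eta, Fin.mk_one, Fin.isValue, of_apply,
      cons_val', cons_val_fin_one, cons_val_zero, cons_val_one, ofReal_div, ofReal_pow, ofReal_ofNat,
      one_mul, zero_mul, zero_add, add_zero]
    ring_nf
    simp only [I_sq, I_pow_three]
    ring

/-- `v⁽ⁿ⁾` is a `2π`-periodic eigenfunction of `W̃(ε)` with eigenvalue
`λₙ(ε) = -1/2 - ε²/4 + √(1+ε²)(n + 1/2)`. -/
theorem vn_is_eigenfunction (n : ℤ) (ε : ℝ) :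
    (∀ x, vn n ε (x + 2 * π) = vn n ε x) ∧
    ∀ x i, Wtilde ε (vn n ε) x i =
      ((-1 / 2 - ε ^ 2 / 4 + Real.sqrt (1 + ε ^ 2) * ((n : ℝ) + 1 / 2) : ℝ) : ℂ) *
        vn n ε x i := by
  have hvn : vn n ε = twoModeWave n ((1 + √(1 + ε ^ 2) : ℝ) : ℂ) (-I * ε) := rfl
  have hs : ((√(1 + ε ^ 2) : ℝ) : ℂ) ^ 2 = 1 + (ε : ℂ) ^ 2 := by
    rw [← ofReal_pow, Real.sq_sqrt (by positivity)]
    push_cast; ring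
  refine ⟨hvn ▸ twoModeWave_periodic n _ _, fun x i => ?_⟩
  rw [hvn, Wtilde_twoModeWave, ← twoModeWave_mul]
  congr 2 <;> push_cast
  · linear_combination (-(n : ℂ) - 1 / 2) * hs + (-(n : ℂ) - 1 / 2) * (ε : ℂ) ^ 2 * I_sq
  · ring
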